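/- For any unitary U on a Hilbert space of dimension 2^{g+t}, and any s ≤ t, we have Tr[(|0⟩⟨0|^{⊗(g+s)} ⊗ I_{t-s}) · U(|0⟩⟨0|^{⊗g} ⊗ π_t)U†] ≤ 2^{-s}, where π_t = I_t/2^t is the maximally mixed state on t qubits. -/

import Mathlib

/-!
The probability in question is `∑ x ∑ y p x q y |U x y|²` with `p` the indicator of the
`2 ^ (t - s)` clean target strings and `q ≤ 2⁻ᵗ` the initial weights. Since every row of a unitary
is a unit vector, the inner sum over `y` is at most `2⁻ᵗ`, so the total is at most
`2 ^ (t - s) · 2⁻ᵗ = 2⁻ˢ`.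
-/

open Matrix Finset

section UnitaryConjugation

variable {n : Type*} [Fintype n] [DecidableEq n]

lemma Matrix.sum_normSq_apply_eq_one_of_mem_unitaryGroup {U : Matrix n n ℂ}
    (hU : U ∈ unitaryGroup n ℂ) (x : n) : ∑ y, Complex.normSq (U x y) = 1 := by
  have h := congr_fun (congr_fun (mem_unitaryGroup_iff.mp hU) x) x
  simp only [mul_apply, star_apply, one_apply_eq, Complex.star_def, Complex.mul_conj] at h
  exact_mod_cast h

lemma Matrix.trace_diagonal_mul_conj_diagonal (p q : n → ℂ) (U : Matrix n n ℂ) :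
    (diagonal p * (U * diagonal q * Uᴴ)).trace =
      ∑ x, ∑ y, p x * q y * Complex.normSq (U x y) := by
  simp only [trace, diag_apply, diagonal_mul, mul_apply (M := U * diagonal q), mul_diagonal,
    conjTranspose_apply, Finset.mul_sum]
  refine Finset.sum_congr rfl fun x _ => Finset.sum_congr rfl fun y _ => ?_
  rw [← Complex.mul_conj, Complex.star_def]
  ring

lemma Matrix.re_trace_diagonal_mul_unitary_conj_le {U : Matrix n n ℂ}
    (hU : U ∈ unitaryGroup n ℂ) {p q : n → ℝ} {c : ℝ} (hp : ∀ x, 0 ≤ p x) (hq : ∀ y, q y ≤ c) :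
    (diagonal (fun x => (p x : ℂ)) * (U * diagonal (fun y => (q y : ℂ)) * Uᴴ)).trace.re ≤
      c * ∑ x, p x := by
  rw [trace_diagonal_mul_conj_diagonal]
  simp only [← Complex.ofReal_mul, ← Complex.ofReal_sum, Complex.ofReal_re]
  have hrow (x : n) : ∑ y, q y * Complex.normSq (U x y) ≤ c :=
    calc ∑ y, q y * Complex.normSq (U x y)
        ≤ ∑ y, c * Complex.normSq (U x y) := by
          gcongr with y; exacts [Complex.normSq_nonneg _, hq y]
      _ = c := by rw [← Finset.mul_sum, sum_normSq_apply_eq_one_of_mem_unitaryGroup hU, mul_one]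
  calc ∑ x, ∑ y, p x * q y * Complex.normSq (U x y)
      = ∑ x, p x * ∑ y, q y * Complex.normSq (U x y) := by simp only [Finset.mul_sum, mul_assoc]
    _ ≤ ∑ x, p x * c := by gcongr with x; exacts [hp x, hrow x]
    _ = c * ∑ x, p x := by rw [← Finset.sum_mul, mul_comm]

end UnitaryConjugation

lemma Finset.card_filter_forall_imp_eq {ι α : Type*} [Fintype ι] [DecidableEq ι] [Fintype α]
    [DecidableEq α] (P : ι → Prop) [DecidablePred P] (a : α) :
    #{x : ι → α | ∀ i, P i → x i = a} = Fintype.card α ^ #{i | ¬ P i} := by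
  have h : ({x : ι → α | ∀ i, P i → x i = a} : Finset (ι → α)) =
      Fintype.piFinset fun i => if P i then {a} else univ := by
    ext x
    simp only [mem_filter, mem_univ, true_and, Fintype.mem_piFinset]
    refine forall_congr' fun i => ?_
    split_ifs with hi <;> simp [hi]
  rw [h, Fintype.card_piFinset]
  simp only [apply_ite card, card_singleton, card_univ, prod_ite, prod_const_one, prod_const,
    one_mul]

lemma card_filter_forall_lt_imp_eq_zero (n k : ℕ) :
    #{x : Fin n → Fin 2 | ∀ i : Fin n, (i : ℕ) < k → x i = 0} = 2 ^ (n - k) := by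
  have hcompl : #{i : Fin n | ¬ (i : ℕ) < k} = n - k := by
    have := card_filter_add_card_filter_not (s := univ) fun i : Fin n => (i : ℕ) < k
    rw [Fin.card_filter_val_lt, card_univ, Fintype.card_fin] at this
    omega
  rw [← hcompl]
  -- `convert` bridges two different decidability instances of the filter predicate
  convert card_filter_forall_imp_eq (fun i : Fin n => (i : ℕ) < k) (0 : Fin 2)
  exact (Fintype.card_fin 2).symm

/-- Soundness of proofs-of-thermodynamical-work: a unitary acting on g clean qubits
and t maximally mixed qubits produces g+s clean qubits with probability at most 2^{-s}. -/
theorem proof_of_work_soundness (g t s : ℕ) (hs : s ≤ t)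
    (U : Matrix (Fin (g + t) → Fin 2) (Fin (g + t) → Fin 2) ℂ)
    (hU : U ∈ Matrix.unitaryGroup (Fin (g + t) → Fin 2) ℂ) :
    (Matrix.trace
      (Matrix.diagonal (fun x : Fin (g + t) → Fin 2 =>
          if ∀ i : Fin (g + t), (i : ℕ) < g + s → x i = 0 then (1 : ℂ) else 0) *
        (U *
          Matrix.diagonal (fun x : Fin (g + t) → Fin 2 =>
            if ∀ i : Fin (g + t), (i : ℕ) < g → x i = 0 then ((1 : ℂ) / 2 ^ t) else 0) *
          Uᴴ))).re ≤ (1 : ℝ) / 2 ^ s := by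
  have h := re_trace_diagonal_mul_unitary_conj_le hU (c := 1 / 2 ^ t)
    (p := fun x => if ∀ i : Fin (g + t), (i : ℕ) < g + s → x i = 0 then 1 else 0)
    (q := fun x => if ∀ i : Fin (g + t), (i : ℕ) < g → x i = 0 then 1 / 2 ^ t else 0)
    (fun x => by positivity) (fun y => by split_ifs <;> norm_num)
  rw [sum_boole, card_filter_forall_lt_imp_eq_zero, Nat.add_sub_add_left] at h
  push_cast [apply_ite Complex.ofReal] at h
  refine h.trans_eq ?_
  rw [← Nat.sub_add_cancel hs, pow_add, Nat.add_sub_cancel]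
  field_simp
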